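/- Let A be a commutative ring of characteristic p > 0 with a Frobenius splitting σ, and let I be an ideal with σ(I) ⊆ I. Then every minimal prime ideal over I is compatibly split, i.e. if P is a prime ideal minimal among primes containing I, then σ(P) ⊆ P. -/

import Mathlib

/-!
Let `P` be a minimal prime over `I` and `J = {x | ∃ s ∉ P, s * x ∈ I}` the kernel of
`A → (A ⧸ I)_P`. Since `(A ⧸ I)_P` has a single prime, `P` is the radical of `J`. The ideal `J`
is again compatibly split, and a compatibly split ideal is radical because `σ (x ^ p) = x`.
Hence `P = J` and `σ P ⊆ P`.
-/

def IsFrobeniusSplitting {A : Type*} [CommRing A] (p : ℕ) (σ : A → A) : Prop :=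
  (∀ a b : A, σ (a + b) = σ a + σ b) ∧ (∀ a b : A, σ (a ^ p * b) = a * σ b) ∧ σ 1 = 1

namespace Ideal

variable {A : Type*} [CommRing A]

def saturation (I : Ideal A) (S : Submonoid A) : Ideal A where
  carrier := {x | ∃ s ∈ S, s * x ∈ I}
  add_mem' := by
    rintro x y ⟨s, hs, hsx⟩ ⟨t, ht, hty⟩
    refine ⟨s * t, S.mul_mem hs ht, ?_⟩
    rw [mul_add]
    exact I.add_mem (by simpa only [mul_right_comm] using I.mul_mem_right t hsx)
      (by simpa only [mul_assoc] using I.mul_mem_left s hty)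
  zero_mem' := ⟨1, S.one_mem, by simp⟩
  smul_mem' := by
    rintro c x ⟨s, hs, hsx⟩
    exact ⟨s, hs, by simpa only [smul_eq_mul, mul_left_comm] using I.mul_mem_left c hsx⟩

theorem saturation_le_of_le {I P : Ideal A} [hP : P.IsPrime] (hIP : I ≤ P) :
    I.saturation P.primeCompl ≤ P := by
  rintro x ⟨s, hs, hsx⟩
  exact (hP.mem_or_mem (hIP hsx)).resolve_left hs

theorem le_radical_saturation_of_mem_minimalPrimes {I P : Ideal A} [P.IsPrime]
    (hP : P ∈ I.minimalPrimes) :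
    P ≤ (I.saturation P.primeCompl).radical := by
  intro a ha
  rw [Ideal.minimalPrimes_eq_comap] at hP
  obtain ⟨Q, hQ, rfl⟩ := hP
  have := hQ.1.1
  let L := Localization.AtPrime Q
  have := Ring.KrullDimLE.of_isLocalization Q hQ L
  have hmem : algebraMap (A ⧸ I) L (Ideal.Quotient.mk I a) ∈ IsLocalRing.maximalIdeal L :=
    (IsLocalization.AtPrime.to_map_mem_maximal_iff L Q _).mpr ha
  obtain ⟨n, hn⟩ := Ring.KrullDimLE.isNilpotent_iff_mem_maximalIdeal.mpr hmem
  rw [← map_pow, IsLocalization.map_eq_zero_iff Q.primeCompl] at hn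
  obtain ⟨⟨s, hs⟩, hsn⟩ := hn
  obtain ⟨t, rfl⟩ := Ideal.Quotient.mk_surjective s
  refine ⟨n, t, hs, Ideal.Quotient.eq_zero_iff_mem.mp ?_⟩
  rwa [map_mul, map_pow]

end Ideal

namespace IsFrobeniusSplitting

variable {A : Type*} [CommRing A] {p : ℕ} {σ : A → A}

theorem apply_pow (hσ : IsFrobeniusSplitting p σ) (x : A) : σ (x ^ p) = x := by
  simpa [hσ.2.2] using hσ.2.1 x 1

theorem mem_of_pow_mem {I : Ideal A} (hσ : IsFrobeniusSplitting p σ)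
    (hI : ∀ a ∈ I, σ a ∈ I) {x : A} (hx : x ^ p ∈ I) : x ∈ I :=
  hσ.apply_pow x ▸ hI _ hx

theorem isRadical_of_compatible (hp : 1 < p) {I : Ideal A} (hσ : IsFrobeniusSplitting p σ)
    (hI : ∀ a ∈ I, σ a ∈ I) : I.IsRadical := by
  have mem_of_pow_pow_mem : ∀ (k : ℕ) {x : A}, x ^ p ^ k ∈ I → x ∈ I := by
    intro k
    induction k with
    | zero => simp
    | succ k ih => exact fun hx ↦ ih (hσ.mem_of_pow_mem hI (by rwa [← pow_mul, ← pow_succ]))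
  rintro x ⟨n, hn⟩
  exact mem_of_pow_pow_mem n (I.pow_mem_of_pow_mem hn (Nat.lt_pow_self hp).le)

theorem saturation_compatible (hp : p ≠ 0) {I : Ideal A} (hσ : IsFrobeniusSplitting p σ)
    (hI : ∀ a ∈ I, σ a ∈ I) (S : Submonoid A) :
    ∀ a ∈ I.saturation S, σ a ∈ I.saturation S := by
  rintro a ⟨s, hs, hsa⟩
  refine ⟨s, hs, hσ.2.1 s a ▸ hI _ ?_⟩
  rw [← pow_sub_one_mul hp, mul_assoc]
  exact I.mul_mem_left _ hsa

end IsFrobeniusSplitting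

theorem frobenius_split_minimal_prime_general {A : Type*} [CommRing A]
    (p : ℕ) [Fact p.Prime] (σ : A → A) (hσ : IsFrobeniusSplitting p σ)
    (I : Ideal A) (hI : ∀ a ∈ I, σ a ∈ I) :
    ∀ P ∈ I.minimalPrimes, ∀ a ∈ P, σ a ∈ P := by
  intro P hP a ha
  have := hP.isPrime
  have hp := (Fact.out : p.Prime)
  set J := I.saturation P.primeCompl
  have hJ : ∀ a ∈ J, σ a ∈ J := hσ.saturation_compatible hp.ne_zero hI _
  have hPJ : P ≤ J :=
    (Ideal.le_radical_saturation_of_mem_minimalPrimes hP).trans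
      (hσ.isRadical_of_compatible hp.one_lt hJ)
  exact Ideal.saturation_le_of_le hP.le (hJ a (hPJ ha))

theorem frobenius_split_minimal_prime {A : Type*} [CommRing A] [IsNoetherianRing A]
    (p : ℕ) [Fact p.Prime] [CharP A p] (σ : A → A) (hσ : IsFrobeniusSplitting p σ)
    (I : Ideal A) (hI : ∀ a ∈ I, σ a ∈ I) :
    ∀ P ∈ I.minimalPrimes, ∀ a ∈ P, σ a ∈ P :=
  frobenius_split_minimal_prime_general p σ hσ I hI
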